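/- arXiv:1111.3827 — 3 statements merged into one kernel-verified Lean document; each statement's English description precedes it below -/
import Mathlib

section
/- For every nonnegative integer $d$, the number of pairs $(l,m)$ of nonnegative integers satisfying $2l + 3m \le d$ equals $1 + \lfloor (d^2+6d)/12 \rfloor$. -/
/-!
Count column by column: for `l ≤ d / 2` there are `(d - 2l) / 3 + 1` admissible `m`. Splitting off
the column `l = 0` gives `S (d + 2) = S d + (d + 2) / 3 + 1`, and the closed form satisfies the same
recursion, which is checked on the residue of `d` modulo `12` (it determines `(d² + 6d) mod 12`).
-/

open Finset

lemma card_filter_range_add_mul_le (n c a : ℕ) (ha : 0 < a) (hc : c ≤ n) :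
    #{m ∈ range (n + 1) | c + a * m ≤ n} = (n - c) / a + 1 := by
  rw [← card_range ((n - c) / a + 1)]
  congr 1
  ext m
  simp only [mem_filter, mem_range, Nat.lt_succ_iff]
  rw [Nat.le_div_iff_mul_le ha, mul_comm]
  constructor
  · rintro ⟨-, h⟩
    omega
  · intro h
    exact ⟨(Nat.le_mul_of_pos_right m ha).trans (h.trans (Nat.sub_le n c)), by omega⟩

lemma card_filter_two_mul_add_three_mul_le (d : ℕ) :
    #{p ∈ range (d + 1) ×ˢ range (d + 1) | 2 * p.1 + 3 * p.2 ≤ d} =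
      ∑ l ∈ range (d / 2 + 1), ((d - 2 * l) / 3 + 1) := by
  calc #{p ∈ range (d + 1) ×ˢ range (d + 1) | 2 * p.1 + 3 * p.2 ≤ d}
      = ∑ l ∈ range (d + 1), #{m ∈ range (d + 1) | 2 * l + 3 * m ≤ d} := by
        simp only [card_filter, sum_product]
    _ = ∑ l ∈ range (d / 2 + 1), #{m ∈ range (d + 1) | 2 * l + 3 * m ≤ d} := by
        refine (sum_subset (range_subset_range.2 (by omega)) fun l _ hl => ?_).symm
        rw [mem_range] at hl
        exact card_eq_zero.2 (filter_eq_empty_iff.2 fun m _ => by omega)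
    _ = ∑ l ∈ range (d / 2 + 1), ((d - 2 * l) / 3 + 1) :=
        sum_congr rfl fun l hl =>
          card_filter_range_add_mul_le d (2 * l) 3 (by norm_num) (by rw [mem_range] at hl; omega)

lemma sq_add_six_mul_mod_twelve (d : ℕ) :
    (d ^ 2 + 6 * d) % 12 = ((d % 12) ^ 2 + 6 * (d % 12)) % 12 :=
  (((Nat.mod_modEq d 12).pow 2).add ((Nat.mod_modEq d 12).mul_left 6)).symm

lemma add_two_sq_add_six_mul_div_twelve (d : ℕ) :
    ((d + 2) ^ 2 + 6 * (d + 2)) / 12 = (d ^ 2 + 6 * d) / 12 + (d + 2) / 3 + 1 := by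
  have hexpand : (d + 2) ^ 2 + 6 * (d + 2) = d ^ 2 + 6 * d + (4 * d + 16) := by ring
  have hmod := sq_add_six_mul_mod_twelve d
  rw [hexpand]
  generalize d ^ 2 + 6 * d = a at hmod ⊢
  have hr : d % 12 < 12 := Nat.mod_lt d (by norm_num)
  generalize hrd : d % 12 = r at hmod hr
  interval_cases r <;> omega

lemma sum_range_sub_two_mul_div_three_add_one (d : ℕ) :
    ∑ l ∈ range (d / 2 + 1), ((d - 2 * l) / 3 + 1) = 1 + (d ^ 2 + 6 * d) / 12 := by
  induction d using Nat.twoStepInduction with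
  | zero => rfl
  | one => rfl
  | more d ih _ =>
    have hshift : ∀ l, (d + 2 - 2 * (l + 1)) / 3 + 1 = (d - 2 * l) / 3 + 1 := fun l => by
      congr 1; omega
    rw [show (d + 2) / 2 + 1 = d / 2 + 1 + 1 by omega, sum_range_succ']
    simp only [hshift]
    rw [ih, add_two_sq_add_six_mul_div_twelve]
    omega

theorem count_pairs_2l3m_le (d : ℕ) :
    ((Finset.range (d+1) ×ˢ Finset.range (d+1)).filter
      (fun p : ℕ × ℕ => 2 * p.1 + 3 * p.2 ≤ d)).card = 1 + (d^2 + 6*d)/12 := by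
  rw [card_filter_two_mul_add_three_mul_le, sum_range_sub_two_mul_div_three_add_one]
end

section
/- In the reference triangle, the 7-point rule with weight $9/40$ at the centroid, weight $(155-\sqrt{15})/1200$ at the three points with areal coordinates permutations of $(1-2a, a, a)$ where $a = (6-\sqrt{15})/21$, and weight $(155+\sqrt{15})/1200$ at the three points with areal coordinates permutations of $(1-2b, b, b)$ where $b = (6+\sqrt{15})/21$, is exact for all polynomials of degree at most 5. -/
/-!
Both sides are linear functionals on polynomials, so it is enough to compare them on the monomials
`x ^ i * y ^ j` with `i + j ≤ 5`. By the Beta integral the integral of such a monomial over the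
triangle is `i! j! / (i + j + 2)!`. On the rule side, the two orbits are exchanged by `√15 ↦ -√15`,
so only even powers of `√15` survive, and the 21 identities become rational arithmetic once
`√15 ^ 2 = 15` is used.
-/

open MvPolynomial intervalIntegral
open scoped Nat

theorem integral_pow_mul_one_sub_pow (i k : ℕ) :
    ∫ x in (0:ℝ)..1, x ^ i * (1 - x) ^ k = (i ! * k ! / (i + k + 1)! : ℝ) := by
  induction k generalizing i with
  | zero =>
    have : ((i + 1 : ℕ) : ℝ) ≠ 0 := by positivity
    simp [Nat.factorial_succ]
    field_simp
  | succ k ih =>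
    have hsplit : ∀ x : ℝ,
        x ^ i * (1 - x) ^ (k + 1) = x ^ i * (1 - x) ^ k - x ^ (i + 1) * (1 - x) ^ k :=
      fun x => by ring
    have hint : ∀ m, IntervalIntegrable (fun x : ℝ => x ^ m * (1 - x) ^ k) MeasureTheory.volume 0 1 :=
      fun m => (by fun_prop : Continuous fun x : ℝ => x ^ m * (1 - x) ^ k).intervalIntegrable 0 1
    simp only [hsplit]
    rw [integral_sub (hint i) (hint (i + 1)), ih, ih, show i + 1 + k + 1 = i + k + 1 + 1 by omega,
      show i + (k + 1) + 1 = i + k + 1 + 1 by omega, Nat.factorial_succ (i + k + 1),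
      Nat.factorial_succ k, Nat.factorial_succ i]
    push_cast
    field_simp
    ring

theorem integral_triangle_pow_mul_pow (i j : ℕ) :
    ∫ x in (0:ℝ)..1, ∫ y in (0:ℝ)..(1 - x), x ^ i * y ^ j = (i ! * j ! / (i + j + 2)! : ℝ) := by
  have hinner : ∀ x : ℝ, ∫ y in (0:ℝ)..(1 - x), x ^ i * y ^ j
      = (j + 1 : ℝ)⁻¹ * (x ^ i * (1 - x) ^ (j + 1)) := fun x => by
    rw [integral_const_mul, integral_pow, zero_pow j.succ_ne_zero]
    ring
  simp only [hinner]
  rw [integral_const_mul, integral_pow_mul_one_sub_pow, Nat.factorial_succ j,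
    show i + (j + 1) + 1 = i + j + 2 by omega]
  push_cast
  field_simp

theorem MvPolynomial.eval_monomial_one_fin_two {R : Type*} [CommSemiring R] (p : Fin 2 → R)
    (d : Fin 2 →₀ ℕ) : eval p (monomial d 1) = p 0 ^ d 0 * p 1 ^ d 1 := by
  rw [eval_monomial, one_mul, Finsupp.prod_fintype _ _ fun _ => pow_zero _, Fin.prod_univ_two]

theorem MvPolynomial.linearMap_apply_eq_of_apply_monomial_eq {σ R M : Type*} [CommSemiring R]
    [AddCommMonoid M] [Module R M] {L L' : MvPolynomial σ R →ₗ[R] M} (f : MvPolynomial σ R)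
    (h : ∀ d ∈ f.support, L (monomial d 1) = L' (monomial d 1)) : L f = L' f := by
  rw [f.as_sum, map_sum, map_sum]
  refine Finset.sum_congr rfl fun d hd => ?_
  rw [← mul_one (coeff d f), ← smul_eq_mul, ← smul_monomial, map_smul, map_smul, h d hd]

theorem MvPolynomial.continuous_eval_pair (p : MvPolynomial (Fin 2) ℝ) :
    Continuous fun z : ℝ × ℝ => eval ![z.1, z.2] p :=
  (continuous_eval p).comp (by fun_prop)

noncomputable def triangleIntegral : MvPolynomial (Fin 2) ℝ →ₗ[ℝ] ℝ where
  toFun p := ∫ x in (0:ℝ)..1, ∫ y in (0:ℝ)..(1 - x), eval ![x, y] p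
  map_add' p q := by
    have hinner : ∀ (r : MvPolynomial (Fin 2) ℝ) (x a b : ℝ),
        IntervalIntegrable (fun y => eval ![x, y] r) MeasureTheory.volume a b := fun r x a b =>
      ((continuous_eval_pair r).comp (Continuous.prodMk_right x)).intervalIntegrable a b
    have houter : ∀ r : MvPolynomial (Fin 2) ℝ, IntervalIntegrable
        (fun x => ∫ y in (0:ℝ)..(1 - x), eval ![x, y] r) MeasureTheory.volume 0 1 := fun r =>
      (continuous_parametric_intervalIntegral_of_continuous (continuous_eval_pair r)
        (by fun_prop)).intervalIntegrable 0 1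
    simp only [map_add]
    simp_rw [integral_add (hinner p _ _ _) (hinner q _ _ _)]
    exact integral_add (houter p) (houter q)
  map_smul' c p := by
    simp only [smul_eval, integral_const_mul, RingHom.id_apply, smul_eq_mul]

noncomputable def triangleMean : MvPolynomial (Fin 2) ℝ →ₗ[ℝ] ℝ :=
  (1 / (1/2 : ℝ)) • triangleIntegral

theorem triangleMean_monomial (d : Fin 2 →₀ ℕ) :
    triangleMean (monomial d 1) = 2 * ((d 0)! * (d 1)! / (d 0 + d 1 + 2)! : ℝ) := by
  simp only [triangleMean, triangleIntegral, LinearMap.smul_apply, LinearMap.coe_mk,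
    AddHom.coe_mk, eval_monomial_one_fin_two, Matrix.cons_val_zero, Matrix.cons_val_one,
    integral_triangle_pow_mul_pow, smul_eq_mul]
  norm_num

noncomputable def pointEval (p : Fin 2 → ℝ) : MvPolynomial (Fin 2) ℝ →ₗ[ℝ] ℝ :=
  (aeval p).toLinearMap

theorem pointEval_apply (p : Fin 2 → ℝ) (f : MvPolynomial (Fin 2) ℝ) :
    pointEval p f = eval p f :=
  rfl

/-- Sum over the three points whose areal coordinates are the permutations of `(1 - 2t, t, t)`. -/
noncomputable def orbitEval (t : ℝ) : MvPolynomial (Fin 2) ℝ →ₗ[ℝ] ℝ :=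
  pointEval ![t, t] + pointEval ![1 - 2 * t, t] + pointEval ![t, 1 - 2 * t]

/-- `s` stands for `√15`; `s = -√15` gives the same rule with the two orbits exchanged. -/
noncomputable def sevenPointRule (s : ℝ) : MvPolynomial (Fin 2) ℝ →ₗ[ℝ] ℝ :=
  (9/40 : ℝ) • pointEval ![1/3, 1/3] + ((155 - s) / 1200) • orbitEval ((6 - s) / 21)
    + ((155 + s) / 1200) • orbitEval ((6 + s) / 21)

theorem sevenPointRule_monomial {s : ℝ} (hs : s ^ 2 = 15) (d : Fin 2 →₀ ℕ)
    (hd : d 0 + d 1 ≤ 5) :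
    sevenPointRule s (monomial d 1) = 2 * ((d 0)! * (d 1)! / (d 0 + d 1 + 2)! : ℝ) := by
  simp only [sevenPointRule, orbitEval, LinearMap.add_apply, LinearMap.smul_apply, smul_eq_mul,
    pointEval_apply, eval_monomial_one_fin_two, Matrix.cons_val_zero, Matrix.cons_val_one]
  generalize d 0 = i, d 1 = j at *
  have hi : i ≤ 5 := by omega
  have hj : j ≤ 5 := by omega
  interval_cases i <;> interval_cases j <;> try omega
  all_goals norm_num [Nat.factorial]; grind

theorem seven_point_rule_degree_five (f : MvPolynomial (Fin 2) ℝ)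
    (hf : f.totalDegree ≤ 5) :
    (9/40 : ℝ) * MvPolynomial.eval ![(1:ℝ)/3, 1/3] f
      + ((155 - Real.sqrt 15)/1200) *
        (MvPolynomial.eval ![(6 - Real.sqrt 15)/21, (6 - Real.sqrt 15)/21] f
          + MvPolynomial.eval ![1 - 2*((6 - Real.sqrt 15)/21), (6 - Real.sqrt 15)/21] f
          + MvPolynomial.eval ![(6 - Real.sqrt 15)/21, 1 - 2*((6 - Real.sqrt 15)/21)] f)
      + ((155 + Real.sqrt 15)/1200) *
        (MvPolynomial.eval ![(6 + Real.sqrt 15)/21, (6 + Real.sqrt 15)/21] f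
          + MvPolynomial.eval ![1 - 2*((6 + Real.sqrt 15)/21), (6 + Real.sqrt 15)/21] f
          + MvPolynomial.eval ![(6 + Real.sqrt 15)/21, 1 - 2*((6 + Real.sqrt 15)/21)] f) =
    (1 / (1/2 : ℝ)) * ∫ x in (0:ℝ)..1, ∫ y in (0:ℝ)..(1-x),
      MvPolynomial.eval ![x, y] f := by
  show sevenPointRule (Real.sqrt 15) f = triangleMean f
  refine linearMap_apply_eq_of_apply_monomial_eq f fun d hd => ?_
  have hdeg : d 0 + d 1 ≤ 5 := by
    simpa [Finsupp.sum_fintype, Fin.sum_univ_two] using (le_totalDegree hd).trans hf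
  rw [sevenPointRule_monomial (Real.sq_sqrt (by norm_num)) d hdeg, triangleMean_monomial]
end

section
/- If $w_0, v_1, v_2, u_1, u_2$ satisfy the degree-5 moment equations $w_0 + v_1 + v_2 = 1$, $v_1u_1^2 + v_2u_2^2 = 1/4$, $v_1u_1^3 + v_2u_2^3 = 1/10$, $v_1u_1^4 + v_2u_2^4 = 1/10$, $v_1u_1^5 + v_2u_2^5 = 2/35$, with $u_1 \ne u_2$, then $u_1+u_2 = 2/7$ and $u_1u_2 = -2/7$ and $w_0 = 9/40$. -/
/-!
The two type-1 orbits contribute the moments `m k = v₁ u₁ ^ k + v₂ u₂ ^ k`, which satisfy the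
linear recurrence `m (k + 2) = s m (k + 1) - p m k` with `s = u₁ + u₂`, `p = u₁ u₂`
(Prony's method). The given values `m 2, …, m 5` turn the recurrences at `k = 2, 3` into a linear
system for `s` and `p`; since `p ≠ 0`, the recurrences at `k = 1, 0` can then be run backwards to
recover `m 1` and `m 0 = v₁ + v₂`, hence `w₀ = 1 - m 0`.
-/

section TwoNodeMoment

variable {R : Type*} [CommRing R]

def twoNodeMoment (v₁ v₂ u₁ u₂ : R) (k : ℕ) : R := v₁ * u₁ ^ k + v₂ * u₂ ^ k

variable (v₁ v₂ u₁ u₂ : R)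

theorem twoNodeMoment_zero : twoNodeMoment v₁ v₂ u₁ u₂ 0 = v₁ + v₂ := by
  simp [twoNodeMoment]

theorem twoNodeMoment_add_two (k : ℕ) :
    twoNodeMoment v₁ v₂ u₁ u₂ (k + 2) =
      (u₁ + u₂) * twoNodeMoment v₁ v₂ u₁ u₂ (k + 1) - u₁ * u₂ * twoNodeMoment v₁ v₂ u₁ u₂ k := by
  simp only [twoNodeMoment]
  ring

end TwoNodeMoment

theorem degree5_moment_equations_general (w₀ v₁ v₂ u₁ u₂ : ℝ)
    (h0 : w₀ + v₁ + v₂ = 1)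
    (h2 : v₁*u₁^2 + v₂*u₂^2 = 1/4)
    (h3 : v₁*u₁^3 + v₂*u₂^3 = 1/10)
    (h4 : v₁*u₁^4 + v₂*u₂^4 = 1/10)
    (h5 : v₁*u₁^5 + v₂*u₂^5 = 2/35) :
    u₁ + u₂ = 2/7 ∧ u₁ * u₂ = -2/7 ∧ w₀ = 9/40 := by
  set m := twoNodeMoment v₁ v₂ u₁ u₂
  have r2 : m 2 = (u₁ + u₂) * m 1 - u₁ * u₂ * m 0 := twoNodeMoment_add_two v₁ v₂ u₁ u₂ 0
  have r3 : m 3 = (u₁ + u₂) * m 2 - u₁ * u₂ * m 1 := twoNodeMoment_add_two v₁ v₂ u₁ u₂ 1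
  have r4 : m 4 = (u₁ + u₂) * m 3 - u₁ * u₂ * m 2 := twoNodeMoment_add_two v₁ v₂ u₁ u₂ 2
  have r5 : m 5 = (u₁ + u₂) * m 4 - u₁ * u₂ * m 3 := twoNodeMoment_add_two v₁ v₂ u₁ u₂ 3
  change m 2 = 1/4 at h2
  change m 3 = 1/10 at h3
  change m 4 = 1/10 at h4
  change m 5 = 2/35 at h5
  rw [h2, h3, h4] at r4
  rw [h3, h4, h5] at r5
  have hp : u₁ * u₂ = -2/7 := by linarith
  have hs : u₁ + u₂ = 2/7 := by linarith
  rw [hs, hp, h2, h3] at r3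
  rw [hs, hp, h2] at r2
  have hm0 : v₁ + v₂ = 31/40 := by
    rw [← twoNodeMoment_zero v₁ v₂ u₁ u₂]
    linarith
  exact ⟨hs, hp, by linarith⟩

theorem degree5_moment_equations (w₀ v₁ v₂ u₁ u₂ : ℝ)
    (h0 : w₀ + v₁ + v₂ = 1)
    (h2 : v₁*u₁^2 + v₂*u₂^2 = 1/4)
    (h3 : v₁*u₁^3 + v₂*u₂^3 = 1/10)
    (h4 : v₁*u₁^4 + v₂*u₂^4 = 1/10)
    (h5 : v₁*u₁^5 + v₂*u₂^5 = 2/35)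
    (hne : u₁ ≠ u₂) :
    u₁ + u₂ = 2/7 ∧ u₁ * u₂ = -2/7 ∧ w₀ = 9/40 :=
  degree5_moment_equations_general w₀ v₁ v₂ u₁ u₂ h0 h2 h3 h4 h5
end
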